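/- For n > 2 and x ∈ [0,1): ∫₀ˣ (1-t)^{n-2} ₂F₁(n, n/2; 1+n/2; t) dt = [(n-2)/(2(n-1))] · x · ₃F₂(2-n/2, 1, 1; 2, 1+n/2; x) + [n/(2(n-1))] · log(1/(1-x)). -/

import Mathlib

open MeasureTheory Real intervalIntegral

/-- Pochhammer symbol (rising factorial) `(x)_k = x(x+1)⋯(x+k-1)`. -/
noncomputable def poch (x : ℝ) (k : ℕ) : ℝ := ∏ i ∈ Finset.range k, (x + i)

/-- Gauss hypergeometric function `₂F₁(a,b;c;t)` as a series. -/
noncomputable def hyp2F1 (a b c t : ℝ) : ℝ :=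
  ∑' k : ℕ, poch a k * poch b k / (poch c k * (Nat.factorial k)) * t ^ k

/-- Generalized hypergeometric function `₃F₂(a₁,a₂,a₃;c₁,c₂;x)` as a series. -/
noncomputable def hyp3F2 (a₁ a₂ a₃ c₁ c₂ x : ℝ) : ℝ :=
  ∑' k : ℕ, poch a₁ k * poch a₂ k * poch a₃ k /
    (poch c₁ k * poch c₂ k * (Nat.factorial k)) * x ^ k

/-!
By Euler's transformation,
`(1 - t)^(n - 2) ₂F₁(n, n/2; 1 + n/2; t) = (1 - t)⁻¹ ₂F₁(1 - n/2, 1; 1 + n/2; t)`.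
For `c = b + 1` the transformation follows from a first-order ODE: both `₂F₁(a, b; b + 1; t)`
and `(1 - t)^(1 - a) ₂F₁(b + 1 - a, 1; b + 1; t)` solve `t F' + b F = b (1 - t)^(-a)`, and for
`b > 0` this equation has at most one solution continuous at `0`, since `t^b (F₁ - F₂)` is
constant and vanishes at `0`. The contiguous relation
`(1 - n) ₂F₁(1 - n/2, 1; 1 + n/2; t) = (1 - n/2)(1 - t) ₂F₁(2 - n/2, 1; 1 + n/2; t) - n/2`
then splits the integrand into
`(n-2)/(2(n-1)) ₂F₁(2 - n/2, 1; 1 + n/2; t) + n/(2(n-1)) (1 - t)⁻¹`.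
Termwise integration of the first series gives `x ₃F₂(2 - n/2, 1, 1; 2, 1 + n/2; x)`, and the
second term integrates to `log (1 / (1 - x))`.
-/

open Filter Set Topology
open scoped Nat

lemma poch_zero (x : ℝ) : poch x 0 = 1 := Finset.prod_range_zero _

lemma poch_succ_right (x : ℝ) (k : ℕ) : poch x (k + 1) = poch x k * (x + k) :=
  Finset.prod_range_succ _ _

lemma poch_succ_left (x : ℝ) (k : ℕ) : poch x (k + 1) = x * poch (x + 1) k := by
  simp only [poch, Finset.prod_range_succ', Nat.cast_succ, Nat.cast_zero, add_zero]
  rw [mul_comm]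
  congr 1
  exact Finset.prod_congr rfl fun i _ => by ring

lemma poch_ne_zero {x : ℝ} (hx : ∀ i : ℕ, x + i ≠ 0) (k : ℕ) : poch x k ≠ 0 :=
  Finset.prod_ne_zero_iff.2 fun i _ => hx i

lemma poch_one (k : ℕ) : poch 1 k = k ! := by
  induction k with
  | zero => simp [poch_zero]
  | succ k ih => rw [poch_succ_right, ih, Nat.factorial_succ]; push_cast; ring

lemma poch_two (k : ℕ) : poch 2 k = (k + 1)! := by
  have h := poch_succ_left 1 k
  rw [poch_one, one_add_one_eq_two, one_mul] at h
  exact h.symm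

lemma poch_eq_ascPochhammer_eval (x : ℝ) (k : ℕ) : poch x k = (ascPochhammer ℝ k).eval x := by
  induction k with
  | zero => simp [poch_zero]
  | succ k ih => rw [poch_succ_right, ascPochhammer_succ_eval, ih]

lemma poch_mul_add (b : ℝ) (k : ℕ) : poch b k * (b + k) = b * poch (b + 1) k := by
  rw [← poch_succ_right, poch_succ_left]

lemma hasSum_poch_div_factorial_mul_pow (a : ℝ) {t : ℝ} (ht : |t| < 1) :
    HasSum (fun k => poch a k / k ! * t ^ k) ((1 - t) ^ (-a)) := by
  have h := (Real.one_div_one_sub_rpow_hasFPowerSeriesOnBall_zero a).hasSum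
    (y := t) (by simpa [enorm_eq_nnnorm, ← NNReal.coe_lt_coe] using ht)
  have h1t : 0 ≤ 1 - t := by linarith [(abs_lt.1 ht).2]
  rw [zero_add, one_div, ← Real.rpow_neg h1t] at h
  refine h.congr_fun fun k => ?_
  rw [FormalMultilinearSeries.ofScalars_apply_eq, Ring.choose_eq_smul,
    Polynomial.descPochhammer_smeval_eq_ascPochhammer, Polynomial.ascPochhammer_smeval_eq_eval,
    poch_eq_ascPochhammer_eval, smul_eq_mul, smul_eq_mul, div_eq_inv_mul]
  congr 3
  ring

lemma summable_mul_pow_of_summable_succ {q : ℕ → ℝ} {t : ℝ}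
    (h : Summable fun k => q (k + 1) * t ^ k) : Summable fun k => q k * t ^ k :=
  (summable_nat_add_iff 1).1 <| (h.mul_left t).congr fun k => by ring

lemma tsum_mul_pow_eq_add_mul_tsum {q : ℕ → ℝ} {t : ℝ}
    (h : Summable fun k => q (k + 1) * t ^ k) :
    ∑' k, q k * t ^ k = q 0 + t * ∑' k, q (k + 1) * t ^ k := by
  rw [(summable_mul_pow_of_summable_succ h).tsum_eq_zero_add, ← tsum_mul_left]
  simp only [pow_zero, mul_one, pow_succ]
  congr 1
  exact tsum_congr fun k => by ring

lemma one_sub_mul_tsum_mul_pow {q : ℕ → ℝ} {t : ℝ}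
    (h : Summable fun k => q (k + 1) * t ^ k) :
    (1 - t) * ∑' k, q k * t ^ k = q 0 + t * ∑' k, (q (k + 1) - q k) * t ^ k := by
  have hsub : ∑' k, (q (k + 1) - q k) * t ^ k
      = ∑' k, q (k + 1) * t ^ k - ∑' k, q k * t ^ k := by
    simp_rw [sub_mul]
    exact h.tsum_sub (summable_mul_pow_of_summable_succ h)
  rw [hsub, tsum_mul_pow_eq_add_mul_tsum h]
  ring

/-- The ratios are a sequence `ρ` rather than `q (k + 1) / q k` because the coefficients may
vanish, as `(1 - n / 2)_k` does for even `n`. -/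
def RatioTendsToOne (q : ℕ → ℝ) : Prop :=
  ∃ ρ : ℕ → ℝ, Tendsto ρ atTop (𝓝 1) ∧ ∀ k, q (k + 1) = ρ k * q k

namespace RatioTendsToOne

variable {q : ℕ → ℝ} {t : ℝ}

lemma summable_mul_pow (hq : RatioTendsToOne q) (ht : |t| < 1) :
    Summable fun k => q k * t ^ k := by
  obtain ⟨ρ, hρ, hrec⟩ := hq
  refine summable_of_ratio_norm_eventually_le (r := (1 + |t|) / 2) (by linarith) ?_
  have hlim : Tendsto (fun k => |ρ k| * |t|) atTop (𝓝 |t|) := by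
    simpa using hρ.abs.mul_const |t|
  filter_upwards [hlim.eventually_lt_const (by linarith : |t| < (1 + |t|) / 2)] with k hk
  simp only [Real.norm_eq_abs, abs_mul, abs_pow, hrec, pow_succ]
  calc |ρ k| * |q k| * (|t| ^ k * |t|) = |ρ k| * |t| * (|q k| * |t| ^ k) := by ring
    _ ≤ (1 + |t|) / 2 * (|q k| * |t| ^ k) := by gcongr

lemma shift (hq : RatioTendsToOne q) : RatioTendsToOne fun k => q (k + 1) :=
  let ⟨ρ, hρ, hrec⟩ := hq
  ⟨fun k => ρ (k + 1), hρ.comp (tendsto_add_atTop_nat 1), fun k => hrec (k + 1)⟩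

lemma succ_mul (hq : RatioTendsToOne q) : RatioTendsToOne fun k => ((k : ℝ) + 1) * q (k + 1) := by
  obtain ⟨ρ, hρ, hrec⟩ := hq
  refine ⟨fun k => (2 + 1 * (k : ℝ)) / (1 + 1 * k) * ρ (k + 1), ?_, fun k => ?_⟩
  · simpa using (tendsto_add_mul_div_add_mul_atTop_nhds (2 : ℝ) 1 1 one_ne_zero).mul
      (hρ.comp (tendsto_add_atTop_nat 1))
  · simp only [hrec (k + 1)]
    field_simp
    push_cast
    ring

lemma summable_natCast_mul_mul_pow (hq : RatioTendsToOne q) (ht : |t| < 1) :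
    Summable fun k : ℕ => (k : ℝ) * q k * t ^ k :=
  summable_mul_pow_of_summable_succ (q := fun k : ℕ => (k : ℝ) * q k) <| by
    simpa using hq.succ_mul.summable_mul_pow ht

lemma hasDerivAt_tsum (hq : RatioTendsToOne q) (ht : |t| < 1) :
    HasDerivAt (fun y => ∑' k, q k * y ^ k)
      (∑' k : ℕ, ((k : ℝ) + 1) * q (k + 1) * t ^ k) t := by
  obtain ⟨r, htr', hr1⟩ := exists_between ht
  have hr0 : 0 < r := (abs_nonneg t).trans_lt htr'
  have htr : t ∈ Ioo (-r) r := by rwa [mem_Ioo, ← abs_lt]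
  have hbound : ∀ k, ∀ y ∈ Ioo (-r) r,
      ‖q k * (k * y ^ (k - 1))‖ ≤ |q k| * (k * r ^ (k - 1)) := by
    intro k y hy
    have hy' : |y| ≤ r := abs_le.2 ⟨hy.1.le, hy.2.le⟩
    rw [Real.norm_eq_abs, abs_mul, abs_mul, abs_pow, Nat.abs_cast]
    gcongr
  have hu : Summable fun k => |q k| * (k * r ^ (k - 1)) := by
    have hr : |r| < 1 := by rwa [abs_of_pos hr0]
    refine (summable_nat_add_iff 1).1 ((hq.succ_mul.summable_mul_pow hr).abs.congr fun k => ?_)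
    rw [abs_mul, abs_mul, abs_pow, abs_of_pos hr0, abs_of_pos (by positivity : (0 : ℝ) < k + 1)]
    push_cast
    ring
  have hD := hasDerivAt_tsum_of_isPreconnected hu isOpen_Ioo isPreconnected_Ioo
    (fun k y _ => (hasDerivAt_pow k y).const_mul (q k)) hbound htr (hq.summable_mul_pow ht) htr
  refine hD.congr_deriv ?_
  rw [(Summable.of_norm_bounded hu (hbound · t htr)).tsum_eq_zero_add]
  simp only [Nat.cast_zero, zero_mul, mul_zero, zero_add, Nat.add_sub_cancel]
  exact tsum_congr fun k => by push_cast; ring_nf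

lemma mul_deriv_tsum (hq : RatioTendsToOne q) (ht : |t| < 1) :
    t * deriv (fun y => ∑' k, q k * y ^ k) t = ∑' k : ℕ, (k : ℝ) * q k * t ^ k := by
  have h : Summable fun k : ℕ => ((k + 1 : ℕ) : ℝ) * q (k + 1) * t ^ k := by
    simpa only [Nat.cast_succ] using hq.succ_mul.summable_mul_pow ht
  have := tsum_mul_pow_eq_add_mul_tsum (q := fun k : ℕ => (k : ℝ) * q k) h
  simp only [Nat.cast_zero, zero_mul, zero_add, Nat.cast_succ] at this
  rw [(hq.hasDerivAt_tsum ht).deriv, this]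

end RatioTendsToOne

noncomputable def coeff2F1 (a b c : ℝ) (k : ℕ) : ℝ := poch a k * poch b k / (poch c k * k !)

lemma hyp2F1_eq_tsum (a b c t : ℝ) : hyp2F1 a b c t = ∑' k, coeff2F1 a b c k * t ^ k := rfl

section coeff2F1

variable {a b c : ℝ}

lemma coeff2F1_zero : coeff2F1 a b c 0 = 1 := by simp [coeff2F1, poch_zero]

lemma coeff2F1_succ (hc : ∀ i : ℕ, c + i ≠ 0) (k : ℕ) :
    coeff2F1 a b c (k + 1) = (a + k) / (c + k) * ((b + k) / (1 + k)) * coeff2F1 a b c k := by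
  have := poch_ne_zero hc k
  have := hc k
  simp only [coeff2F1, poch_succ_right, Nat.factorial_succ]
  push_cast
  field_simp
  ring

lemma ratioTendsToOne_coeff2F1 (hc : ∀ i : ℕ, c + i ≠ 0) :
    RatioTendsToOne (coeff2F1 a b c) := by
  refine ⟨_, ?_, coeff2F1_succ hc⟩
  simpa using (tendsto_add_mul_div_add_mul_atTop_nhds a c 1 one_ne_zero).mul
    (tendsto_add_mul_div_add_mul_atTop_nhds b 1 1 one_ne_zero)

lemma add_mul_coeff2F1_add_one (hc : ∀ i : ℕ, b + 1 + i ≠ 0) (k : ℕ) :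
    (b + k) * coeff2F1 a b (b + 1) k = b * (poch a k / k !) := by
  have := poch_ne_zero hc k
  calc (b + k) * coeff2F1 a b (b + 1) k
        = poch a k * (poch b k * (b + k)) / (poch (b + 1) k * k !) := by rw [coeff2F1]; ring
    _ = b * (poch a k / k !) := by rw [poch_mul_add]; field_simp

lemma coeff2F1_one (a c : ℝ) (k : ℕ) : coeff2F1 a 1 c k = poch a k / poch c k := by
  rw [coeff2F1, poch_one, mul_div_mul_right _ _ (by positivity)]

lemma add_mul_coeff2F1_one_succ (hc : ∀ i : ℕ, c + i ≠ 0) (k : ℕ) :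
    (c + k) * coeff2F1 a 1 c (k + 1) = (a + k) * coeff2F1 a 1 c k := by
  have := poch_ne_zero hc k
  have := hc k
  simp only [coeff2F1_one, poch_succ_right]
  field_simp

lemma coeff2F1_one_contiguous (hc : ∀ i : ℕ, c + i ≠ 0) (k : ℕ) :
    (a + 1 - c) * coeff2F1 a 1 c (k + 1)
      = a * (coeff2F1 (a + 1) 1 c (k + 1) - coeff2F1 (a + 1) 1 c k) := by
  have := poch_ne_zero hc k
  have := hc k
  simp only [coeff2F1_one, poch_succ_left a, poch_succ_right]
  field_simp
  ring

end coeff2F1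

section hyp2F1

variable {a b c t : ℝ}

lemma differentiableAt_hyp2F1 (hc : ∀ i : ℕ, c + i ≠ 0) (ht : |t| < 1) :
    DifferentiableAt ℝ (hyp2F1 a b c) t :=
  ((ratioTendsToOne_coeff2F1 hc).hasDerivAt_tsum ht).differentiableAt

lemma mul_deriv_hyp2F1 (hc : ∀ i : ℕ, c + i ≠ 0) (ht : |t| < 1) :
    t * deriv (hyp2F1 a b c) t = ∑' k : ℕ, (k : ℝ) * coeff2F1 a b c k * t ^ k :=
  (ratioTendsToOne_coeff2F1 hc).mul_deriv_tsum ht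

lemma mul_deriv_hyp2F1_add_mul (hb : 0 < b) (ht : |t| < 1) :
    t * deriv (hyp2F1 a b (b + 1)) t + b * hyp2F1 a b (b + 1) t = b * (1 - t) ^ (-a) := by
  have hc : ∀ i : ℕ, b + 1 + i ≠ 0 := fun i => by positivity
  have hq := ratioTendsToOne_coeff2F1 (a := a) (b := b) hc
  rw [mul_deriv_hyp2F1 hc ht, hyp2F1_eq_tsum, ← tsum_mul_left,
    ← (hasSum_poch_div_factorial_mul_pow a ht).tsum_eq, ← tsum_mul_left,
    ← (hq.summable_natCast_mul_mul_pow ht).tsum_add ((hq.summable_mul_pow ht).mul_left b)]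
  refine tsum_congr fun k => ?_
  linear_combination t ^ k * add_mul_coeff2F1_add_one (a := a) hc k

lemma mul_one_sub_mul_deriv_hyp2F1 (hc : ∀ i : ℕ, c + i ≠ 0) (ht : |t| < 1) :
    t * (1 - t) * deriv (hyp2F1 a 1 c) t = (a * t - (c - 1)) * hyp2F1 a 1 c t + (c - 1) := by
  set e := coeff2F1 a 1 c
  have hq : RatioTendsToOne e := ratioTendsToOne_coeff2F1 hc
  have hU : hyp2F1 a 1 c t = 1 + t * ∑' k, e (k + 1) * t ^ k := by
    rw [hyp2F1_eq_tsum, tsum_mul_pow_eq_add_mul_tsum (hq.shift.summable_mul_pow ht),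
      show e 0 = 1 from coeff2F1_zero]
  have hθ : (1 - t) * ∑' k : ℕ, (k : ℝ) * e k * t ^ k
      = t * ∑' k : ℕ, (((k : ℝ) + 1) * e (k + 1) - k * e k) * t ^ k := by
    have h := one_sub_mul_tsum_mul_pow (q := fun k : ℕ => (k : ℝ) * e k) (t := t)
      (by simpa only [Nat.cast_succ] using hq.succ_mul.summable_mul_pow ht)
    simpa only [Nat.cast_zero, zero_mul, zero_add, Nat.cast_succ] using h
  have hcoeff : ∑' k : ℕ, (((k : ℝ) + 1) * e (k + 1) - k * e k) * t ^ k
      = a * hyp2F1 a 1 c t - (c - 1) * ∑' k, e (k + 1) * t ^ k := by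
    rw [hyp2F1_eq_tsum, ← tsum_mul_left, ← tsum_mul_left,
      ← ((hq.summable_mul_pow ht).mul_left a).tsum_sub
        ((hq.shift.summable_mul_pow ht).mul_left (c - 1))]
    refine tsum_congr fun k => ?_
    linear_combination t ^ k * add_mul_coeff2F1_one_succ (a := a) hc k
  rw [mul_comm t, mul_assoc, mul_deriv_hyp2F1 hc ht, hθ, hcoeff, hU]
  ring

lemma hyp2F1_one_contiguous (hc : ∀ i : ℕ, c + i ≠ 0) (ht : |t| < 1) :
    (a + 1 - c) * hyp2F1 a 1 c t = a * (1 - t) * hyp2F1 (a + 1) 1 c t + (1 - c) := by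
  have he : RatioTendsToOne (coeff2F1 a 1 c) := ratioTendsToOne_coeff2F1 hc
  have hp : RatioTendsToOne (coeff2F1 (a + 1) 1 c) := ratioTendsToOne_coeff2F1 hc
  rw [mul_assoc, hyp2F1_eq_tsum, hyp2F1_eq_tsum, one_sub_mul_tsum_mul_pow
    (hp.shift.summable_mul_pow ht), tsum_mul_pow_eq_add_mul_tsum (he.shift.summable_mul_pow ht),
    coeff2F1_zero, coeff2F1_zero]
  have h : (a + 1 - c) * ∑' k, coeff2F1 a 1 c (k + 1) * t ^ k
      = a * ∑' k, (coeff2F1 (a + 1) 1 c (k + 1) - coeff2F1 (a + 1) 1 c k) * t ^ k := by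
    rw [← tsum_mul_left, ← tsum_mul_left]
    exact tsum_congr fun k => by rw [← mul_assoc, coeff2F1_one_contiguous hc]; ring
  linear_combination t * h

end hyp2F1

lemma eq_zero_of_mul_deriv_add_mul_eq_zero {b T t : ℝ} (hb : 0 < b) {W W' : ℝ → ℝ}
    (hW : ContinuousAt W 0) (hderiv : ∀ s ∈ Ioo 0 T, HasDerivAt W (W' s) s)
    (hode : ∀ s ∈ Ioo 0 T, s * W' s + b * W s = 0) (ht : t ∈ Ico 0 T) : W t = 0 := by
  have hφ' : ∀ s ∈ Ioo 0 T, HasDerivAt (fun y => y ^ b * W y) 0 s := by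
    intro s hs
    refine ((Real.hasDerivAt_rpow_const (p := b) (Or.inl hs.1.ne')).mul
      (hderiv s hs)).congr_deriv ?_
    have := hs.1.ne'
    rw [Real.rpow_sub_one this]
    field_simp
    linear_combination s ^ b * hode s hs
  have hφ : ∀ s ∈ Ioo 0 T, s ^ b * W s = 0 := by
    intro s hs
    have hcont : ContinuousOn (fun y => y ^ b * W y) (Icc 0 s) := by
      intro y hy
      rcases hy.1.eq_or_lt with rfl | hy0
      · exact ((Real.continuousAt_rpow_const _ _ (Or.inr hb.le)).mul hW).continuousWithinAt
      · exact (hφ' y ⟨hy0, hy.2.trans_lt hs.2⟩).continuousAt.continuousWithinAt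
    obtain ⟨y, -, hslope⟩ := exists_hasDerivAt_eq_slope _ (fun _ => 0) hs.1 hcont
      fun y hy => hφ' y ⟨hy.1, hy.2.trans hs.2⟩
    rw [Real.zero_rpow hb.ne', zero_mul, sub_zero, sub_zero, eq_comm, div_eq_zero_iff] at hslope
    exact hslope.resolve_right hs.1.ne'
  have hpos : ∀ s ∈ Ioo 0 T, W s = 0 := fun s hs =>
    (mul_eq_zero.1 (hφ s hs)).resolve_left (Real.rpow_pos_of_pos hs.1 b).ne'
  rcases ht.1.eq_or_lt with rfl | ht0
  · refine tendsto_nhds_unique (hW.tendsto.mono_left (nhdsWithin_le_nhds (s := Ioi 0))) ?_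
    exact tendsto_const_nhds.congr' <| by
      filter_upwards [Ioo_mem_nhdsGT ht.2] with s hs using (hpos s hs).symm
  · exact hpos t ⟨ht0, ht.2⟩

section Euler

variable {a b s : ℝ}

lemma differentiableAt_one_sub_rpow_mul_hyp2F1 (hb : 0 < b) (hs : |s| < 1) :
    DifferentiableAt ℝ (fun y => (1 - y) ^ (1 - a) * hyp2F1 (b + 1 - a) 1 (b + 1) y) s := by
  have h1s : 1 - s ≠ 0 := by linarith [(abs_lt.1 hs).2]
  exact (((hasDerivAt_id s).const_sub 1).rpow_const (p := 1 - a) (Or.inl h1s)).differentiableAt.mul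
    (differentiableAt_hyp2F1 (fun i => by positivity) hs)

lemma mul_deriv_one_sub_rpow_mul_hyp2F1_add_mul (hb : 0 < b) (hs : |s| < 1) :
    s * deriv (fun y => (1 - y) ^ (1 - a) * hyp2F1 (b + 1 - a) 1 (b + 1) y) s
      + b * ((1 - s) ^ (1 - a) * hyp2F1 (b + 1 - a) 1 (b + 1) s) = b * (1 - s) ^ (-a) := by
  have hc : ∀ i : ℕ, b + 1 + i ≠ 0 := fun i => by positivity
  have h1s : 0 < 1 - s := by linarith [(abs_lt.1 hs).2]
  have hU := differentiableAt_hyp2F1 (a := b + 1 - a) (b := 1) hc hs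
  have hV : HasDerivAt (fun y => (1 - y) ^ (1 - a) * hyp2F1 (b + 1 - a) 1 (b + 1) y) _ s :=
    (((hasDerivAt_id' s).const_sub 1).rpow_const (p := 1 - a) (Or.inl h1s.ne')).mul hU.hasDerivAt
  rw [hV.deriv]
  have hpow : (1 - s) ^ (1 - a) = (1 - s) * (1 - s) ^ (-a) := by
    rw [sub_eq_add_neg 1 a, Real.rpow_add h1s, Real.rpow_one]
  rw [hpow, show (1 : ℝ) - a - 1 = -a by ring]
  linear_combination (1 - s) ^ (-a) * mul_one_sub_mul_deriv_hyp2F1 (a := b + 1 - a) hc hs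

/-- Euler's transformation `₂F₁(a, b; c; t) = (1 - t)^(c - a - b) ₂F₁(c - a, c - b; c; t)`
for `c = b + 1`. -/
theorem one_sub_rpow_mul_hyp2F1 (hb : 0 < b) {t : ℝ} (ht : t ∈ Ico 0 1) :
    (1 - t) ^ (a - 1) * hyp2F1 a b (b + 1) t = hyp2F1 (b + 1 - a) 1 (b + 1) t := by
  have hc : ∀ i : ℕ, b + 1 + i ≠ 0 := fun i => by positivity
  set V := fun y => (1 - y) ^ (1 - a) * hyp2F1 (b + 1 - a) 1 (b + 1) y
  have hdiff : ∀ s, |s| < 1 → DifferentiableAt ℝ (hyp2F1 a b (b + 1) - V) s := fun s hs =>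
    (differentiableAt_hyp2F1 hc hs).sub (differentiableAt_one_sub_rpow_mul_hyp2F1 hb hs)
  have habs : ∀ s ∈ Ioo (0 : ℝ) 1, |s| < 1 := fun s hs =>
    abs_lt.2 ⟨by linarith [hs.1], hs.2⟩
  have hW : (hyp2F1 a b (b + 1) - V) t = 0 := by
    refine eq_zero_of_mul_deriv_add_mul_eq_zero hb (hdiff 0 (by simp)).continuousAt
      (fun s hs => (hdiff s (habs s hs)).hasDerivAt) (fun s hs => ?_) ht
    rw [deriv_sub (differentiableAt_hyp2F1 hc (habs s hs))
      (differentiableAt_one_sub_rpow_mul_hyp2F1 hb (habs s hs)), Pi.sub_apply]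
    linear_combination mul_deriv_hyp2F1_add_mul (a := a) hb (habs s hs)
      - mul_deriv_one_sub_rpow_mul_hyp2F1_add_mul (a := a) hb (habs s hs)
  have h1t : 0 < 1 - t := by linarith [ht.2]
  rw [Pi.sub_apply, sub_eq_zero] at hW
  rw [hW, ← mul_assoc, ← Real.rpow_add h1t, show a - 1 + (1 - a) = 0 by ring, Real.rpow_zero,
    one_mul]

end Euler

lemma integral_tsum_mul_pow {q : ℕ → ℝ} {x : ℝ} (hq : Summable fun k => ‖q k * x ^ k‖) :
    ∫ t in (0 : ℝ)..x, ∑' k, q k * t ^ k = ∑' k : ℕ, q k * (x ^ (k + 1) / (k + 1)) := by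
  have hbound : ∀ k, ∀ t ∈ Set.uIoc 0 x, ‖q k * t ^ k‖ ≤ ‖q k * x ^ k‖ := by
    intro k t ht
    have : |t| ≤ |x| := by
      rcases le_total 0 x with h | h
      · rw [uIoc_of_le h] at ht; rw [abs_of_pos ht.1, abs_of_nonneg h]; exact ht.2
      · rw [uIoc_of_ge h] at ht; rw [abs_of_nonpos ht.2, abs_of_nonpos h]; linarith [ht.1]
    simp only [norm_mul, norm_pow, Real.norm_eq_abs]
    gcongr
  have hsum := intervalIntegral.hasSum_integral_of_dominated_convergence
    (F := fun k t => q k * t ^ k) (f := fun t => ∑' k, q k * t ^ k) (μ := volume)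
    (fun k _ => ‖q k * x ^ k‖) (fun k => (by fun_prop : Continuous _).aestronglyMeasurable)
    (fun k => ae_of_all _ (hbound k)) (ae_of_all _ fun _ _ => hq) intervalIntegrable_const
    (ae_of_all _ fun t ht => (Summable.of_norm_bounded hq (hbound · t ht)).hasSum)
  rw [← hsum.tsum_eq]
  exact tsum_congr fun k => by simp [intervalIntegral.integral_const_mul, integral_pow]

lemma integral_one_sub_inv {x : ℝ} (hx : x < 1) :
    ∫ t in (0 : ℝ)..x, (1 - t)⁻¹ = Real.log (1 / (1 - x)) := by
  rw [intervalIntegral.integral_comp_sub_left (fun t => t⁻¹) 1, sub_zero,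
    integral_inv_of_pos (by linarith) one_pos]

lemma mul_hyp3F2_one_one_two (a c x : ℝ) :
    x * hyp3F2 a 1 1 2 c x = ∑' k : ℕ, coeff2F1 a 1 c k * (x ^ (k + 1) / (k + 1)) := by
  rw [hyp3F2, ← tsum_mul_left]
  refine tsum_congr fun k => ?_
  rw [coeff2F1, poch_one, poch_two, Nat.factorial_succ]
  push_cast
  field_simp
  ring

lemma integral_hyp2F1_one {a c x : ℝ} (hc : ∀ i : ℕ, c + i ≠ 0) (hx : |x| < 1) :
    ∫ t in (0 : ℝ)..x, hyp2F1 a 1 c t = x * hyp3F2 a 1 1 2 c x := by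
  simp only [hyp2F1_eq_tsum, mul_hyp3F2_one_one_two]
  exact integral_tsum_mul_pow ((ratioTendsToOne_coeff2F1 hc).summable_mul_pow hx).norm

lemma one_sub_rpow_mul_hyp2F1_half_eq {n t : ℝ} (hn : 0 < n) (hn1 : n ≠ 1)
    (ht : t ∈ Ico 0 1) :
    (1 - t) ^ (n - 2) * hyp2F1 n (n / 2) (1 + n / 2) t
      = (n - 2) / (2 * (n - 1)) * hyp2F1 (2 - n / 2) 1 (1 + n / 2) t
        + n / (2 * (n - 1)) * (1 - t)⁻¹ := by
  have h1t : 0 < 1 - t := by linarith [ht.2]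
  have hc : ∀ i : ℕ, n / 2 + 1 + i ≠ 0 := fun i => by positivity
  have heuler := one_sub_rpow_mul_hyp2F1 (a := n) (b := n / 2) (by positivity) ht
  have hcontig := hyp2F1_one_contiguous (a := n / 2 + 1 - n) hc
    (abs_lt.2 ⟨by linarith [ht.1], ht.2⟩)
  rw [show n / 2 + 1 = 1 + n / 2 by ring] at heuler hcontig
  rw [show 1 + n / 2 - n + 1 = 2 - n / 2 by ring] at hcontig
  have hpow : (1 - t) ^ (n - 1) = (1 - t) ^ (n - 2) * (1 - t) := by
    rw [← Real.rpow_add_one h1t.ne']; ring_nf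
  rw [hpow] at heuler
  have hn1' : n - 1 ≠ 0 := sub_ne_zero.2 hn1
  generalize hyp2F1 n (n / 2) (1 + n / 2) t = F at heuler ⊢
  generalize hyp2F1 (1 + n / 2 - n) 1 (1 + n / 2) t = U at heuler hcontig
  generalize hyp2F1 (2 - n / 2) 1 (1 + n / 2) t = P at hcontig ⊢
  field_simp
  linear_combination 2 * (n - 1) * heuler - 2 * hcontig

/-- for `n > 2` and `x ∈ [0,1)`,
`∫₀ˣ (1-t)^{n-2} ₂F₁(n, n/2; 1+n/2; t) dt
  = ((n-2)/(2(n-1))) x ₃F₂(2-n/2,1,1;2,1+n/2;x) + (n/(2(n-1))) log(1/(1-x))`. -/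
theorem integral_fn (n : ℝ) (hn : 2 < n) (x : ℝ) (hx : x ∈ Set.Ico (0:ℝ) 1) :
    ∫ t in (0:ℝ)..x, (1 - t) ^ (n - 2) * hyp2F1 n (n / 2) (1 + n / 2) t
      = (n - 2) / (2 * (n - 1)) * x * hyp3F2 (2 - n / 2) 1 1 2 (1 + n / 2) x
        + n / (2 * (n - 1)) * Real.log (1 / (1 - x)) := by
  have hc : ∀ i : ℕ, 1 + n / 2 + i ≠ 0 := fun i => by positivity
  have hIcc : ∀ t ∈ uIcc 0 x, t ∈ Ico 0 1 := fun t ht => by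
    rw [uIcc_of_le hx.1] at ht
    exact ⟨ht.1, ht.2.trans_lt hx.2⟩
  have habs : ∀ t ∈ Ico (0 : ℝ) 1, |t| < 1 := fun t ht =>
    abs_lt.2 ⟨by linarith [ht.1], ht.2⟩
  have hP : IntervalIntegrable (hyp2F1 (2 - n / 2) 1 (1 + n / 2)) volume 0 x :=
    ContinuousOn.intervalIntegrable fun t ht =>
      (differentiableAt_hyp2F1 hc (habs t (hIcc t ht))).continuousAt.continuousWithinAt
  have hinv : IntervalIntegrable (fun t => (1 - t)⁻¹) volume 0 x :=
    ContinuousOn.intervalIntegrable fun t ht =>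
      ((continuousAt_const.sub continuousAt_id).inv₀
        (sub_ne_zero.2 (hIcc t ht).2.ne')).continuousWithinAt
  rw [intervalIntegral.integral_congr fun t ht =>
      one_sub_rpow_mul_hyp2F1_half_eq (by linarith) (by linarith) (hIcc t ht),
    intervalIntegral.integral_add (hP.const_mul _) (hinv.const_mul _),
    intervalIntegral.integral_const_mul, intervalIntegral.integral_const_mul,
    integral_hyp2F1_one hc (habs x hx), integral_one_sub_inv hx.2, mul_assoc]
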